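/- arXiv:2110.07706 — 5 statements merged into one kernel-verified Lean document; each statement's English description precedes it below -/
import Mathlib

section
/- Every connected quasi-threshold graph has a dominating vertex, i.e., a vertex adjacent to all other vertices. -/
/-- `G` contains an induced path on four vertices. -/
def HasInducedP4 {V : Type*} (G : SimpleGraph V) : Prop :=
  ∃ a b c d : V, a ≠ b ∧ a ≠ c ∧ a ≠ d ∧ b ≠ c ∧ b ≠ d ∧ c ≠ d ∧
    G.Adj a b ∧ G.Adj b c ∧ G.Adj c d ∧ ¬ G.Adj a c ∧ ¬ G.Adj a d ∧ ¬ G.Adj b d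

/-- `G` contains an induced cycle on four vertices. -/
def HasInducedC4 {V : Type*} (G : SimpleGraph V) : Prop :=
  ∃ a b c d : V, a ≠ b ∧ a ≠ c ∧ a ≠ d ∧ b ≠ c ∧ b ≠ d ∧ c ≠ d ∧
    G.Adj a b ∧ G.Adj b c ∧ G.Adj c d ∧ G.Adj d a ∧ ¬ G.Adj a c ∧ ¬ G.Adj b d

/-- A quasi-threshold (trivially perfect) graph is a `{P₄, C₄}`-free graph. -/
def IsQuasiThreshold {V : Type*} (G : SimpleGraph V) : Prop :=
  ¬ HasInducedP4 G ∧ ¬ HasInducedC4 G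

private lemma walk_escape {V : Type*} (G : SimpleGraph V) (v : V) :
    ∀ {a u : V} (_ : G.Walk a u), (a = v ∨ G.Adj v a) → u ≠ v → ¬ G.Adj v u →
    ∃ w x, G.Adj v w ∧ G.Adj w x ∧ x ≠ v ∧ ¬ G.Adj v x := by
  intro a u p
  induction p with
  | nil =>
    rintro (rfl | h) hne hadj
    · exact absurd rfl hne
    · exact absurd h hadj
  | @cons a b u h p ih =>
    intro ha hne hadj
    by_cases hb : b = v ∨ G.Adj v b
    · exact ih hb hne hadj
    · push_neg at hb
      have hva : G.Adj v a := by
        rcases ha with rfl | ha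
        · exact absurd h hb.2
        · exact ha
      exact ⟨a, b, hva, h, hb.1, hb.2⟩

theorem quasiThreshold_connected_has_dominating_vertex {V : Type*} [Fintype V]
    (G : SimpleGraph V) (hconn : G.Connected) (hqt : IsQuasiThreshold G) :
    ∃ v : V, ∀ u : V, u ≠ v → G.Adj v u := by
  classical
  have hne : Nonempty V := hconn.nonempty
  obtain ⟨v, -, hv⟩ := Finset.exists_max_image Finset.univ (fun a => G.degree a)
    ⟨Classical.arbitrary V, Finset.mem_univ _⟩
  by_contra hcon
  push_neg at hcon
  obtain ⟨u, hune, huadj⟩ := hcon v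
  obtain ⟨p⟩ := hconn.preconnected v u
  obtain ⟨w, x, hvw, hwx, hxv, hvx⟩ := walk_escape G v p (Or.inl rfl) hune huadj
  -- basic distinctness
  have hxw : x ≠ w := fun h => hvx (h ▸ hvw)
  have hwv : w ≠ v := fun h => G.irrefl (h ▸ hvw)
  -- every neighbor of v (other than w) is a neighbor of w
  have hsub : insert v (insert x ((G.neighborFinset v).erase w)) ⊆ G.neighborFinset w := by
    intro y hy
    rw [SimpleGraph.mem_neighborFinset]
    rcases Finset.mem_insert.1 hy with rfl | hy
    · exact hvw.symm
    rcases Finset.mem_insert.1 hy with rfl | hy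
    · exact hwx
    obtain ⟨hyw, hyv⟩ := Finset.mem_erase.1 hy
    rw [SimpleGraph.mem_neighborFinset] at hyv
    by_contra hwy
    have hxy : x ≠ y := fun h => hvx (h ▸ hyv)
    have hvy : v ≠ y := fun h => G.irrefl (h ▸ hyv)
    by_cases hxyadj : G.Adj x y
    · exact hqt.2 ⟨x, w, v, y, hxw, hxv, hxy, hwv, hyw.symm, hvy,
        hwx.symm, hvw.symm, hyv, hxyadj.symm, hvx ∘ SimpleGraph.Adj.symm, hwy⟩
    · exact hqt.1 ⟨x, w, v, y, hxw, hxv, hxy, hwv, hyw.symm, hvy,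
        hwx.symm, hvw.symm, hyv, hvx ∘ SimpleGraph.Adj.symm, hxyadj, hwy⟩
  -- cardinality
  have hwmem : w ∈ G.neighborFinset v := (SimpleGraph.mem_neighborFinset _ _ _).2 hvw
  have hxnot : x ∉ (G.neighborFinset v).erase w := by
    simp only [Finset.mem_erase, SimpleGraph.mem_neighborFinset]
    exact fun h => hvx h.2
  have hvnot : v ∉ insert x ((G.neighborFinset v).erase w) := by
    simp only [Finset.mem_insert, Finset.mem_erase, SimpleGraph.mem_neighborFinset]
    rintro (rfl | ⟨-, h⟩)
    · exact hxv rfl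
    · exact G.irrefl h
  have hcard : (insert v (insert x ((G.neighborFinset v).erase w))).card = G.degree v + 1 := by
    rw [Finset.card_insert_of_notMem hvnot, Finset.card_insert_of_notMem hxnot,
      Finset.card_erase_of_mem hwmem]
    have h0 : 1 ≤ (G.neighborFinset v).card := Finset.card_pos.2 ⟨w, hwmem⟩
    rw [← SimpleGraph.card_neighborFinset_eq_degree]
    omega
  have h1 := Finset.card_le_card hsub
  rw [hcard, SimpleGraph.card_neighborFinset_eq_degree] at h1
  have h2 := hv w (Finset.mem_univ w)
  omega
end

section
/- For a connected quasi-threshold graph G, the minimum number of edges in a co-bipartite completion of G is a lower bound on the minimum number of edges in a proper interval completion of G. -/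
def IsProperIntervalGraph {V : Type*} (G : SimpleGraph V) : Prop :=
  ∃ a b : V → ℝ, (∀ v, a v ≤ b v) ∧
    (∀ u v, G.Adj u v ↔ u ≠ v ∧ a u ≤ b v ∧ a v ≤ b u) ∧
    (∀ u v, a u ≤ a v → b v ≤ b u → a u = a v ∧ b u = b v)

def IsCoBipartite {V : Type*} (G : SimpleGraph V) : Prop :=
  ∃ s : Set V, G.IsClique s ∧ G.IsClique sᶜ

/-- The minimum number of fill edges of a co-bipartite completion of `G`. -/
noncomputable def cobipCompletionNumber {V : Type*} [Fintype V] (G : SimpleGraph V) : ℕ :=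
  sInf {m | ∃ H : SimpleGraph V, G ≤ H ∧ IsCoBipartite H ∧ (H.edgeSet \ G.edgeSet).ncard = m}

/-- The minimum number of fill edges of a proper interval completion of `G`. -/
noncomputable def pigCompletionNumber {V : Type*} [Fintype V] (G : SimpleGraph V) : ℕ :=
  sInf {m | ∃ H : SimpleGraph V, G ≤ H ∧ IsProperIntervalGraph H ∧ (H.edgeSet \ G.edgeSet).ncard = m}


lemma exists_dominating {V : Type*} [Fintype V] (G : SimpleGraph V)
    (hconn : G.Connected) (hqt : IsQuasiThreshold G) :
    ∃ v, ∀ u, u ≠ v → G.Adj v u := by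
  classical
  have hne : Nonempty V := hconn.nonempty
  obtain ⟨v, hv⟩ := Finite.exists_max (fun v => G.degree v)
  refine ⟨v, ?_⟩
  by_contra h
  push_neg at h
  obtain ⟨w, hwv, hw⟩ := h
  have hwS : w ∉ {u | u = v ∨ G.Adj v u} := by
    intro hmem
    rcases hmem with h1 | h1
    · exact hwv h1
    · exact hw h1
  obtain ⟨p⟩ := hconn v w
  obtain ⟨d, _, hfst, hsnd⟩ :=
    p.exists_boundary_dart {u | u = v ∨ G.Adj v u} (Or.inl rfl) hwS
  set x1 := d.fst with hx1
  set x2 := d.snd with hx2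
  have hadj : G.Adj x1 x2 := d.adj
  have hvx2 : ¬ G.Adj v x2 := fun hc => hsnd (Or.inr hc)
  have hx2v : x2 ≠ v := fun hc => hsnd (Or.inl hc)
  have hvx1 : G.Adj v x1 := by
    rcases hfst with h1 | h1
    · exact absurd (h1 ▸ hadj) hvx2
    · exact h1
  have key : ∀ y, G.Adj v y → y ≠ x1 → G.Adj x1 y := by
    intro y hvy hyx1
    by_contra hnadj
    have hyx1' : ¬ G.Adj y x1 := fun hc => hnadj hc.symm
    have hyv : y ≠ v := hvy.ne'
    have hyx2 : y ≠ x2 := fun hc => hvx2 (hc ▸ hvy)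
    by_cases hyx2a : G.Adj y x2
    · exact hqt.2 ⟨y, v, x1, x2, hyv, hyx1, hyx2, hvx1.ne, hx2v.symm, hadj.ne,
        hvy.symm, hvx1, hadj, hyx2a.symm, hyx1', hvx2⟩
    · exact hqt.1 ⟨y, v, x1, x2, hyv, hyx1, hyx2, hvx1.ne, hx2v.symm, hadj.ne,
        hvy.symm, hvx1, hadj, hyx1', hyx2a, hvx2⟩
  have hsub : insert v (insert x2 ((G.neighborFinset v).erase x1)) ⊆ G.neighborFinset x1 := by
    intro y hy
    simp only [Finset.mem_insert, Finset.mem_erase, SimpleGraph.mem_neighborFinset] at hy ⊢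
    rcases hy with rfl | rfl | ⟨hy1, hy2⟩
    · exact hvx1.symm
    · exact hadj
    · exact key y hy2 hy1
  have hcard : (insert v (insert x2 ((G.neighborFinset v).erase x1))).card
      = G.degree v + 1 := by
    rw [Finset.card_insert_of_notMem, Finset.card_insert_of_notMem,
      Finset.card_erase_of_mem]
    · have h1 : 1 ≤ G.degree v := by
        rw [← SimpleGraph.card_neighborFinset_eq_degree]
        exact Finset.card_pos.mpr ⟨x1, (SimpleGraph.mem_neighborFinset _ _ _).mpr hvx1⟩
      rw [SimpleGraph.card_neighborFinset_eq_degree]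
      omega
    · exact (SimpleGraph.mem_neighborFinset _ _ _).mpr hvx1
    · simp only [Finset.mem_erase, SimpleGraph.mem_neighborFinset]
      exact fun ⟨_, hc⟩ => hvx2 hc
    · simp only [Finset.mem_insert, Finset.mem_erase, SimpleGraph.mem_neighborFinset]
      rintro (rfl | ⟨_, hc⟩)
      · exact hx2v rfl
      · exact G.irrefl hc
  have hle := Finset.card_le_card hsub
  rw [hcard, SimpleGraph.card_neighborFinset_eq_degree] at hle
  have := hv x1
  omega

lemma cobip_of_pig_dom {V : Type*} (H : SimpleGraph V) (hpig : IsProperIntervalGraph H)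
    (v : V) (hv : ∀ u, u ≠ v → H.Adj v u) : IsCoBipartite H := by
  obtain ⟨a, b, hab, hadj, hprop⟩ := hpig
  refine ⟨{u | a u ≤ a v}, ?_, ?_⟩
  · intro u hu w hw huw
    simp only [Set.mem_setOf_eq] at hu hw
    refine (hadj u w).mpr ⟨huw, ?_, ?_⟩
    · rcases eq_or_ne w v with rfl | hwv
      · exact hu.trans (hab w)
      · exact hu.trans ((hadj v w).mp (hv w hwv)).2.1
    · rcases eq_or_ne u v with rfl | huv
      · exact hw.trans (hab u)
      · exact hw.trans ((hadj v u).mp (hv u huv)).2.1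
  · intro u hu w hw huw
    simp only [Set.mem_compl_iff, Set.mem_setOf_eq, not_le] at hu hw
    have huv : u ≠ v := fun hc => lt_irrefl _ (hc ▸ hu)
    have hwv : w ≠ v := fun hc => lt_irrefl _ (hc ▸ hw)
    obtain ⟨_, hu1, hu2⟩ := (hadj v u).mp (hv u huv)
    obtain ⟨_, hw1, hw2⟩ := (hadj v w).mp (hv w hwv)
    have hbu : b v < b u := by
      by_contra hc
      push_neg at hc
      exact absurd (hprop v u hu.le hc).1 hu.ne
    have hbw : b v < b w := by
      by_contra hc
      push_neg at hc
      exact absurd (hprop v w hw.le hc).1 hw.ne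
    exact (hadj u w).mpr ⟨huw, hu2.trans_lt hbw |>.le, hw2.trans_lt hbu |>.le⟩

theorem cobip_le_pig_of_quasiThreshold {V : Type*} [Fintype V] (G : SimpleGraph V)
    (hconn : G.Connected) (hqt : IsQuasiThreshold G) :
    cobipCompletionNumber G ≤ pigCompletionNumber G := by
  obtain ⟨v, hv⟩ := exists_dominating G hconn hqt
  have htop : IsProperIntervalGraph (⊤ : SimpleGraph V) := by
    refine ⟨fun _ => 0, fun _ => 1, fun _ => zero_le_one, fun u w => ?_,
      fun u w _ _ => ⟨rfl, rfl⟩⟩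
    simp [zero_le_one]
  have hne : {m | ∃ H : SimpleGraph V, G ≤ H ∧ IsProperIntervalGraph H ∧
      (H.edgeSet \ G.edgeSet).ncard = m}.Nonempty :=
    ⟨_, ⊤, le_top, htop, rfl⟩
  obtain ⟨H, hGH, hpig, hcard⟩ := Nat.sInf_mem hne
  apply Nat.sInf_le
  refine ⟨H, hGH, cobip_of_pig_dom H hpig v (fun u hu => hGH (hv u hu)), hcard⟩
end

section
/- Every proper interval graph with a dominating vertex is co-bipartite, i.e., its vertex set can be partitioned into at most two cliques. -/
theorem pig_dominating_coBipartite {V : Type*} (G : SimpleGraph V)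
    (hG : IsProperIntervalGraph G) (v : V) (hdom : ∀ u : V, u ≠ v → G.Adj v u) :
    IsCoBipartite G := by
  obtain ⟨a, b, hab, hadj, hprop⟩ := hG
  -- key facts from domination
  have hvle : ∀ u, u ≠ v → a v ≤ b u := fun u hu => ((hadj v u).mp (hdom u hu)).2.1
  have hlev : ∀ u, u ≠ v → a u ≤ b v := fun u hu => ((hadj v u).mp (hdom u hu)).2.2
  have hbv : ∀ u, a v < a u → b v ≤ b u := by
    intro u hu
    by_contra h
    exact hu.ne (hprop v u hu.le (le_of_not_ge h)).1
  refine ⟨{u | a u ≤ a v}, ?_, ?_⟩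
  · intro u hu w hw huw
    have key : ∀ x y : V, a x ≤ a v → y ≠ x → a x ≤ b y := by
      intro x y hx hy
      by_cases hyv : y = v
      · rw [hyv]; exact le_trans hx (hab v)
      · exact le_trans hx (hvle y hyv)
    exact (hadj u w).mpr ⟨huw, key u w hu huw.symm, key w u hw huw⟩
  · intro u hu w hw huw
    simp only [Set.mem_compl_iff, Set.mem_setOf_eq, not_le] at hu hw
    have huv : u ≠ v := fun h => absurd (h ▸ hu) (lt_irrefl _)
    have hwv : w ≠ v := fun h => absurd (h ▸ hw) (lt_irrefl _)
    exact (hadj u w).mpr ⟨huw, le_trans (hlev u huv) (hbv w hw),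
      le_trans (hlev w hwv) (hbv u hu)⟩
end

section
/- Let G be the disjoint union of graphs G_1 on n_1 vertices and G_2 on n_2 vertices. The minimum number of fill edges in a co-bipartite completion of G such that one clique has exactly j vertices equals the minimum over k of [c_1(k) + c_2(j−k) + k(j−k) + (n_1−k)(n_2−j+k)], where c_i(t) denotes the minimum number of fill edges in a co-bipartite completion of G_i with one clique of size exactly t, and k ranges over max(0, j−n_2) ≤ k ≤ min(j, n_1). -/
/-- The minimum number of fill edges in a co-bipartite completion of `G` in which the
first clique of the partition has exactly `t` vertices. -/
noncomputable def cobipCompletionNumberWith {V : Type*} [Fintype V]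
    (G : SimpleGraph V) (t : ℕ) : ℕ :=
  sInf {m | ∃ (H : SimpleGraph V) (s : Set V), G ≤ H ∧ H.IsClique s ∧ H.IsClique sᶜ ∧
    s.ncard = t ∧ (H.edgeSet \ G.edgeSet).ncard = m}

/-!
Restricting a co-bipartite completion `H` of `G1 ⊕g G2` with cliques `s`, `sᶜ` to `V1` and to `V2`
gives completions of `G1` and `G2` with cliques of sizes `k = |s ∩ V1|` and `j - k`. The fill edges
of `H` are those inside `V1`, those inside `V2`, and cross edges, and the cross edges include every
pair lying on the same side of the partition: `k (j - k) + (n1 - k) (n2 - (j - k))` of them.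
Conversely, optimal completions of `G1` and `G2` with cliques of sizes `k` and `j - k` glue, by
adding exactly these cross edges, to a completion of `G1 ⊕g G2` attaining that value. Hence every
element of either infimum's set is bounded below by an element of the other set.
-/

open Set Function

theorem Set.ncard_preimage_inl_add_ncard_preimage_inr {α β : Type*} [Finite α] [Finite β]
    (T : Set (α ⊕ β)) : (Sum.inl ⁻¹' T).ncard + (Sum.inr ⁻¹' T).ncard = T.ncard := by
  conv_rhs => rw [← image_preimage_inl_union_image_preimage_inr T]
  rw [ncard_union_eq disjoint_image_inl_image_inr, ncard_image_of_injective _ Sum.inl_injective,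
    ncard_image_of_injective _ Sum.inr_injective]

theorem Set.ncard_image_inl_union_image_inr {α β : Type*} [Finite α] [Finite β]
    (s : Set α) (t : Set β) : (Sum.inl '' s ∪ Sum.inr '' t).ncard = s.ncard + t.ncard := by
  rw [← ncard_preimage_inl_add_ncard_preimage_inr]
  simp [Sum.inl_injective.preimage_image, Sum.inr_injective.preimage_image]

theorem Set.ncard_setOf_mem_iff_mem {α β : Type*} [Finite α] [Finite β] (s : Set α) (t : Set β) :
    {p : α × β | p.1 ∈ s ↔ p.2 ∈ t}.ncard =
      s.ncard * t.ncard + (Nat.card α - s.ncard) * (Nat.card β - t.ncard) := by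
  have hunion : {p : α × β | p.1 ∈ s ↔ p.2 ∈ t} = s ×ˢ t ∪ sᶜ ×ˢ tᶜ := by
    ext p
    simp only [mem_ofPred_eq, mem_union, mem_prod, mem_compl_iff]
    tauto
  have hdisj : Disjoint (s ×ˢ t) (sᶜ ×ˢ tᶜ) := disjoint_prod.2 (.inl disjoint_compl_right)
  rw [hunion, ncard_union_eq hdisj, ncard_prod, ncard_prod, ncard_compl, ncard_compl]

namespace Sym2

noncomputable def sumEquiv (α β : Type*) : Sym2 α ⊕ Sym2 β ⊕ α × β ≃ Sym2 (α ⊕ β) :=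
  Equiv.ofBijective
    (Sum.elim (map Sum.inl) (Sum.elim (map Sum.inr) fun p => s(Sum.inl p.1, Sum.inr p.2))) <| by
    refine ⟨?_, fun e => ?_⟩
    · rintro (x | x | ⟨a, b⟩) (y | y | ⟨c, d⟩) h <;> (try induction x using Sym2.ind) <;>
        (try induction y using Sym2.ind) <;> simp_all
    · induction e using Sym2.ind with
      | _ x y =>
      rcases x with a | a <;> rcases y with b | b
      · exact ⟨.inl s(a, b), rfl⟩
      · exact ⟨.inr (.inr (a, b)), rfl⟩
      · exact ⟨.inr (.inr (b, a)), eq_swap⟩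
      · exact ⟨.inr (.inl s(a, b)), rfl⟩

theorem ncard_eq_inl_add_inr_add_cross {α β : Type*} [Finite α] [Finite β] (S : Set (Sym2 (α ⊕ β))) :
    S.ncard = (map Sum.inl ⁻¹' S).ncard + (map Sum.inr ⁻¹' S).ncard +
      {p : α × β | s(Sum.inl p.1, Sum.inr p.2) ∈ S}.ncard := by
  rw [← ncard_preimage_of_injective_subset_range (sumEquiv α β).injective
    (by simp [(sumEquiv α β).surjective.range_eq]), ← ncard_preimage_inl_add_ncard_preimage_inr,
    ← ncard_preimage_inl_add_ncard_preimage_inr, add_assoc]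
  rfl

end Sym2

namespace SimpleGraph

variable {α β : Type*}

theorem IsClique.comap {H : SimpleGraph β} {s : Set β} (h : H.IsClique s) {f : α → β}
    (hf : Injective f) : (H.comap f).IsClique (f ⁻¹' s) :=
  fun _ ha _ hb hab => h ha hb (hf.ne hab)

theorem isClique_sum_iff {H : SimpleGraph (α ⊕ β)} {T : Set (α ⊕ β)} :
    H.IsClique T ↔ (H.comap Sum.inl).IsClique (Sum.inl ⁻¹' T) ∧
      (H.comap Sum.inr).IsClique (Sum.inr ⁻¹' T) ∧
      ∀ a b, Sum.inl a ∈ T → Sum.inr b ∈ T → H.Adj (Sum.inl a) (Sum.inr b) := by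
  refine ⟨fun h => ⟨h.comap Sum.inl_injective, h.comap Sum.inr_injective,
    fun a b ha hb => h ha hb Sum.inl_ne_inr⟩, ?_⟩
  rintro ⟨hl, hr, hlr⟩ (a | a) ha (b | b) hb hab
  · exact hl ha hb (ne_of_apply_ne _ hab)
  · exact hlr a b ha hb
  · exact (hlr b a hb ha).symm
  · exact hr ha hb (ne_of_apply_ne _ hab)

theorem ncard_edgeSet_sdiff_sum [Finite α] [Finite β] (G1 : SimpleGraph α) (G2 : SimpleGraph β)
    (H : SimpleGraph (α ⊕ β)) :
    (H.edgeSet \ (G1 ⊕g G2).edgeSet).ncard =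
      ((H.comap Sum.inl).edgeSet \ G1.edgeSet).ncard +
      ((H.comap Sum.inr).edgeSet \ G2.edgeSet).ncard +
      {p : α × β | H.Adj (Sum.inl p.1) (Sum.inr p.2)}.ncard := by
  rw [Sym2.ncard_eq_inl_add_inr_add_cross]
  congr 3 <;> ext e
  · induction e using Sym2.ind; simp
  · induction e using Sym2.ind; simp
  · simp

def joinAlong (H1 : SimpleGraph α) (H2 : SimpleGraph β) (R : α → β → Prop) :
    SimpleGraph (α ⊕ β) where
  Adj
    | .inl a, .inl b => H1.Adj a b
    | .inl a, .inr b => R a b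
    | .inr b, .inl a => R a b
    | .inr a, .inr b => H2.Adj a b
  symm := ⟨by rintro (a | a) (b | b) h <;> first | exact h.symm | exact h⟩
  loopless := ⟨by rintro (a | a) h; exacts [H1.irrefl h, H2.irrefl h]⟩

variable {H1 : SimpleGraph α} {H2 : SimpleGraph β} {R : α → β → Prop}

@[simp] theorem comap_inl_joinAlong : (joinAlong H1 H2 R).comap Sum.inl = H1 := rfl

@[simp] theorem comap_inr_joinAlong : (joinAlong H1 H2 R).comap Sum.inr = H2 := rfl

@[simp] theorem joinAlong_adj_inl_inr {a : α} {b : β} :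
    (joinAlong H1 H2 R).Adj (.inl a) (.inr b) ↔ R a b := Iff.rfl

theorem sum_le_joinAlong {G1 : SimpleGraph α} {G2 : SimpleGraph β} (h1 : G1 ≤ H1) (h2 : G2 ≤ H2) :
    G1 ⊕g G2 ≤ joinAlong H1 H2 R := by
  rintro (a | a) (b | b) h
  · exact h1 h
  · simp at h
  · simp at h
  · exact h2 h

theorem ncard_edgeSet_joinAlong_sdiff_sum [Finite α] [Finite β] (G1 : SimpleGraph α)
    (G2 : SimpleGraph β) :
    ((joinAlong H1 H2 R).edgeSet \ (G1 ⊕g G2).edgeSet).ncard =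
      (H1.edgeSet \ G1.edgeSet).ncard + (H2.edgeSet \ G2.edgeSet).ncard +
      {p : α × β | R p.1 p.2}.ncard := by
  rw [ncard_edgeSet_sdiff_sum]
  rfl

end SimpleGraph

open SimpleGraph

structure IsCobipCompletion {V : Type*} (G H : SimpleGraph V) (s : Set V) : Prop where
  le : G ≤ H
  isClique : H.IsClique s
  isClique_compl : H.IsClique sᶜ

section Fintype

variable {V : Type*} [Fintype V]

theorem cobipCompletionNumberWith_le {G H : SimpleGraph V} {s : Set V}
    (h : IsCobipCompletion G H s) :
    cobipCompletionNumberWith G s.ncard ≤ (H.edgeSet \ G.edgeSet).ncard :=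
  Nat.sInf_le ⟨H, s, h.le, h.isClique, h.isClique_compl, rfl, rfl⟩

theorem exists_isCobipCompletion_ncard_sdiff_eq (G : SimpleGraph V) {t : ℕ}
    (ht : t ≤ Fintype.card V) :
    ∃ H s, IsCobipCompletion G H s ∧ s.ncard = t ∧
      (H.edgeSet \ G.edgeSet).ncard = cobipCompletionNumberWith G t := by
  obtain ⟨s, -, hs⟩ := exists_subset_card_eq (s := (univ : Set V)) (n := t)
    (by rwa [ncard_univ, Nat.card_eq_fintype_card])
  have hne : {m | ∃ (H : SimpleGraph V) (s : Set V), G ≤ H ∧ H.IsClique s ∧ H.IsClique sᶜ ∧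
      s.ncard = t ∧ (H.edgeSet \ G.edgeSet).ncard = m}.Nonempty :=
    ⟨_, ⊤, s, le_top, .top _, .top _, hs, rfl⟩
  obtain ⟨H, s, hle, h1, h2, ht, hm⟩ := Nat.sInf_mem hne
  exact ⟨H, s, ⟨hle, h1, h2⟩, ht, hm⟩

end Fintype

section DisjointUnion

variable {V1 V2 : Type*} {G1 : SimpleGraph V1} {G2 : SimpleGraph V2}

namespace IsCobipCompletion

variable {H : SimpleGraph (V1 ⊕ V2)} {s : Set (V1 ⊕ V2)}

theorem comap_inl (h : IsCobipCompletion (G1 ⊕g G2) H s) :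
    IsCobipCompletion G1 (H.comap Sum.inl) (Sum.inl ⁻¹' s) :=
  ⟨fun _ _ hab => h.le (by simpa using hab), h.isClique.comap Sum.inl_injective,
    h.isClique_compl.comap Sum.inl_injective⟩

theorem comap_inr (h : IsCobipCompletion (G1 ⊕g G2) H s) :
    IsCobipCompletion G2 (H.comap Sum.inr) (Sum.inr ⁻¹' s) :=
  ⟨fun _ _ hab => h.le (by simpa using hab), h.isClique.comap Sum.inr_injective,
    h.isClique_compl.comap Sum.inr_injective⟩

theorem sum {H1 : SimpleGraph V1} {H2 : SimpleGraph V2} {s1 : Set V1} {s2 : Set V2}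
    (h1 : IsCobipCompletion G1 H1 s1) (h2 : IsCobipCompletion G2 H2 s2) :
    IsCobipCompletion (G1 ⊕g G2) (joinAlong H1 H2 fun a b => a ∈ s1 ↔ b ∈ s2)
      (Sum.inl '' s1 ∪ Sum.inr '' s2) := by
  refine ⟨sum_le_joinAlong h1.le h2.le, isClique_sum_iff.2 ⟨?_, ?_, ?_⟩,
    isClique_sum_iff.2 ⟨?_, ?_, ?_⟩⟩
  · simpa [Sum.inl_injective.preimage_image] using h1.isClique
  · simpa [Sum.inr_injective.preimage_image] using h2.isClique
  · intro a b ha hb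
    simp_all
  · simpa [Sum.inl_injective.preimage_image] using h1.isClique_compl
  · simpa [Sum.inr_injective.preimage_image] using h2.isClique_compl
  · intro a b ha hb
    simp_all

variable [Fintype V1] [Fintype V2]

theorem le_ncard_sdiff_sum (h : IsCobipCompletion (G1 ⊕g G2) H s) {k l : ℕ}
    (hk : (Sum.inl ⁻¹' s).ncard = k) (hl : (Sum.inr ⁻¹' s).ncard = l) :
    cobipCompletionNumberWith G1 k + cobipCompletionNumberWith G2 l + k * l +
        (Fintype.card V1 - k) * (Fintype.card V2 - l) ≤
      (H.edgeSet \ (G1 ⊕g G2).edgeSet).ncard := by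
  have hcross : {p : V1 × V2 | p.1 ∈ Sum.inl ⁻¹' s ↔ p.2 ∈ Sum.inr ⁻¹' s} ⊆
      {p | H.Adj (Sum.inl p.1) (Sum.inr p.2)} := by
    rintro ⟨a, b⟩ hab
    by_cases ha : Sum.inl a ∈ s
    · exact h.isClique ha (hab.1 ha) Sum.inl_ne_inr
    · exact h.isClique_compl ha (mt hab.2 ha) Sum.inl_ne_inr
  have h3 := ncard_le_ncard hcross
  rw [ncard_setOf_mem_iff_mem, hk, hl, Nat.card_eq_fintype_card, Nat.card_eq_fintype_card] at h3
  have h1 := cobipCompletionNumberWith_le h.comap_inl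
  have h2 := cobipCompletionNumberWith_le h.comap_inr
  rw [hk] at h1
  rw [hl] at h2
  rw [ncard_edgeSet_sdiff_sum]
  omega

end IsCobipCompletion

end DisjointUnion

theorem cobip_completion_disjoint_union_general {V1 V2 : Type*} [Fintype V1] [Fintype V2]
    (G1 : SimpleGraph V1) (G2 : SimpleGraph V2) (n1 n2 : ℕ)
    (hn1 : Fintype.card V1 = n1) (hn2 : Fintype.card V2 = n2)
    (j : ℕ) :
    cobipCompletionNumberWith (G1 ⊕g G2) j =
      sInf {m | ∃ k : ℕ, j - n2 ≤ k ∧ k ≤ min j n1 ∧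
        m = cobipCompletionNumberWith G1 k + cobipCompletionNumberWith G2 (j - k) +
            k * (j - k) + (n1 - k) * (n2 - (j - k))} := by
  subst hn1 hn2
  apply csInf_eq_csInf_of_forall_exists_le
  · rintro _ ⟨H, s, hle, hs, hsc, rfl, rfl⟩
    have hsplit := ncard_preimage_inl_add_ncard_preimage_inr s
    have hk := ncard_le_card (Sum.inl ⁻¹' s)
    have hl := ncard_le_card (Sum.inr ⁻¹' s)
    rw [Nat.card_eq_fintype_card] at hk hl
    refine ⟨_, ⟨(Sum.inl ⁻¹' s).ncard, by omega, by omega, rfl⟩, ?_⟩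
    exact IsCobipCompletion.le_ncard_sdiff_sum ⟨hle, hs, hsc⟩ rfl (by omega)
  · rintro _ ⟨k, hjk, hkj, rfl⟩
    obtain ⟨H1, s1, h1, hs1, hf1⟩ := exists_isCobipCompletion_ncard_sdiff_eq G1 (t := k) (by omega)
    obtain ⟨H2, s2, h2, hs2, hf2⟩ :=
      exists_isCobipCompletion_ncard_sdiff_eq G2 (t := j - k) (by omega)
    have h := h1.sum h2
    refine ⟨_, ⟨_, _, h.le, h.isClique, h.isClique_compl, ?_, rfl⟩, le_of_eq ?_⟩
    · rw [ncard_image_inl_union_image_inr, hs1, hs2]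
      omega
    · rw [ncard_edgeSet_joinAlong_sdiff_sum, hf1, hf2, ncard_setOf_mem_iff_mem, hs1, hs2,
        Nat.card_eq_fintype_card, Nat.card_eq_fintype_card]
      ring

theorem cobip_completion_disjoint_union {V1 V2 : Type*} [Fintype V1] [Fintype V2]
    (G1 : SimpleGraph V1) (G2 : SimpleGraph V2) (n1 n2 : ℕ)
    (hn1 : Fintype.card V1 = n1) (hn2 : Fintype.card V2 = n2)
    (j : ℕ) (hj : j ≤ n1 + n2) :
    cobipCompletionNumberWith (G1 ⊕g G2) j =
      sInf {m | ∃ k : ℕ, j - n2 ≤ k ∧ k ≤ min j n1 ∧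
        m = cobipCompletionNumberWith G1 k + cobipCompletionNumberWith G2 (j - k) +
            k * (j - k) + (n1 - k) * (n2 - (j - k))} :=
  cobip_completion_disjoint_union_general G1 G2 n1 n2 hn1 hn2 j
end

section
/- A graph is an interval graph if and only if its maximal cliques can be linearly ordered X_1, ..., X_s such that for every vertex v, the set of indices i with v ∈ X_i is an interval of consecutive integers. -/
/-!
Given an interval representation `v ↦ [a v, b v]`, the point `p c = sup_{v ∈ c} a v` of a clique
`c` lies in every interval of `c`; by maximality a maximal clique `c` is exactly the set of
vertices whose interval contains `p c`. So `p` separates maximal cliques, and listing them by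
increasing `p` makes the cliques containing `v` those with `p c ∈ [a v, b v]`, a consecutive run.
Conversely, given such an ordering, the interval of `v` is the range of indices of the cliques
containing it: two such ranges meet iff some clique contains both vertices.
-/

/-- An interval graph: an intersection graph of closed real intervals. -/
def IsIntervalGraph {V : Type*} (G : SimpleGraph V) : Prop :=
  ∃ a b : V → ℝ, (∀ v, a v ≤ b v) ∧
    (∀ u v, G.Adj u v ↔ u ≠ v ∧ a u ≤ b v ∧ a v ≤ b u)

/-- A maximal clique of `G`. -/
def IsMaxClique {V : Type*} (G : SimpleGraph V) (s : Set V) : Prop :=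
  G.IsClique s ∧ ∀ t : Set V, G.IsClique t → s ⊆ t → s = t

open Set

lemma Set.Finite.exists_enum_monotone {α β : Type*} [LinearOrder β] {s : Set α}
    (hs : s.Finite) {p : α → β} (hp : InjOn p s) :
    ∃ (n : ℕ) (X : Fin n → α), Function.Injective X ∧ range X = s ∧ Monotone (p ∘ X) := by
  have := hs.fintype
  let _ : LinearOrder s := LinearOrder.lift' (fun c => p c) hp.injective
  let e := Fintype.orderIsoFinOfCardEq s rfl
  refine ⟨_, fun i => e i, Subtype.val_injective.comp e.injective, ?_, fun _ _ h => e.monotone h⟩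
  exact (e.surjective.range_comp Subtype.val).trans Subtype.range_coe

lemma Finset.coe_eq_Icc_min'_max' {ι : Type*} [LinearOrder ι] {T : Finset ι} (hT : T.Nonempty)
    (hconn : (T : Set ι).OrdConnected) : (T : Set ι) = Set.Icc (T.min' hT) (T.max' hT) :=
  Set.Subset.antisymm (fun _ hj => ⟨T.min'_le _ hj, T.le_max' _ hj⟩)
    (hconn.out (T.min'_mem hT) (T.max'_mem hT))

section

variable {V : Type*} {G : SimpleGraph V}

lemma isMaxClique_iff_maximal {s : Set V} : IsMaxClique G s ↔ Maximal G.IsClique s :=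
  ⟨fun h => ⟨h.1, fun _ ht hst => (h.2 _ ht hst).ge⟩,
    fun h => ⟨h.1, fun _ ht hst => hst.antisymm (h.2 ht hst)⟩⟩

lemma exists_isMaxClique_superset [Finite V] {c : Set V} (hc : G.IsClique c) :
    ∃ m, IsMaxClique G m ∧ c ⊆ m := by
  obtain ⟨m, hcm, hm⟩ := Finite.exists_le_maximal hc
  exact ⟨m, isMaxClique_iff_maximal.2 hm, hcm⟩

section IntervalModel

variable {a b : V → ℝ}

lemma isClique_of_forall_mem_Icc (hadj : ∀ u v, G.Adj u v ↔ u ≠ v ∧ a u ≤ b v ∧ a v ≤ b u)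
    {s : Set V} {x : ℝ} (hx : ∀ v ∈ s, x ∈ Icc (a v) (b v)) : G.IsClique s :=
  fun u hu v hv huv =>
    (hadj u v).2 ⟨huv, (hx u hu).1.trans (hx v hv).2, (hx v hv).1.trans (hx u hu).2⟩

lemma SimpleGraph.IsClique.sSup_image_mem_Icc (hab : ∀ v, a v ≤ b v)
    (hadj : ∀ u v, G.Adj u v ↔ u ≠ v ∧ a u ≤ b v ∧ a v ≤ b u) {c : Set V} (hc : G.IsClique c)
    {v : V} (hv : v ∈ c) : sSup (a '' c) ∈ Icc (a v) (b v) := by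
  have hbound : b v ∈ upperBounds (a '' c) := by
    rintro _ ⟨u, hu, rfl⟩
    obtain rfl | huv := eq_or_ne u v
    · exact hab u
    · exact ((hadj u v).1 (hc hu hv huv)).2.1
  exact ⟨le_csSup ⟨b v, hbound⟩ (mem_image_of_mem a hv), csSup_le ⟨a v, v, hv, rfl⟩ hbound⟩

lemma IsMaxClique.mem_iff_sSup_image_mem_Icc (hab : ∀ v, a v ≤ b v)
    (hadj : ∀ u v, G.Adj u v ↔ u ≠ v ∧ a u ≤ b v ∧ a v ≤ b u) {c : Set V} (hc : IsMaxClique G c)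
    {v : V} : v ∈ c ↔ sSup (a '' c) ∈ Icc (a v) (b v) := by
  refine ⟨hc.1.sSup_image_mem_Icc hab hadj, fun hv => ?_⟩
  have hins : G.IsClique (insert v c) := isClique_of_forall_mem_Icc hadj <| by
    rintro u (rfl | hu)
    exacts [hv, hc.1.sSup_image_mem_Icc hab hadj hu]
  rw [hc.2 _ hins (subset_insert v c)]
  exact mem_insert v c

lemma injOn_sSup_image_isMaxClique (hab : ∀ v, a v ≤ b v)
    (hadj : ∀ u v, G.Adj u v ↔ u ≠ v ∧ a u ≤ b v ∧ a v ≤ b u) :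
    InjOn (fun c => sSup (a '' c)) {c | IsMaxClique G c} := fun c hc d hd hcd => by
  ext v
  rw [IsMaxClique.mem_iff_sSup_image_mem_Icc hab hadj hc,
    IsMaxClique.mem_iff_sSup_image_mem_Icc hab hadj hd, show sSup (a '' c) = sSup (a '' d) from hcd]

end IntervalModel

lemma isIntervalGraph_of_consecutive_cliques {s : ℕ} (X : Fin s → Set V)
    (hclique : ∀ i, G.IsClique (X i)) (hcover : ∀ c, G.IsClique c → ∃ i, c ⊆ X i)
    (hcons : ∀ (v : V) (i j k : Fin s), i ≤ j → j ≤ k → v ∈ X i → v ∈ X k → v ∈ X j) :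
    IsIntervalGraph G := by
  classical
  let T (v : V) : Finset (Fin s) := {i | v ∈ X i}
  have hT (v : V) : (T v).Nonempty := by
    obtain ⟨i, hi⟩ := hcover {v} (G.isClique_singleton v)
    exact ⟨i, by simpa [T] using hi rfl⟩
  have hmem (v : V) (j : Fin s) : v ∈ X j ↔ j ∈ Icc ((T v).min' (hT v)) ((T v).max' (hT v)) := by
    have hconn : (T v : Set (Fin s)).OrdConnected := ⟨fun i hi k hk j hj => by
      simp_all only [Finset.coe_filter, Finset.mem_univ, true_and, mem_ofPred_eq, T]
      exact hcons v i j k hj.1 hj.2 hi hk⟩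
    simpa [T] using (Set.ext_iff.1 (Finset.coe_eq_Icc_min'_max' (hT v) hconn) j)
  have hadj (u v : V) : G.Adj u v ↔ u ≠ v ∧ ∃ j, u ∈ X j ∧ v ∈ X j := by
    refine ⟨fun h => ⟨h.ne, ?_⟩, fun ⟨hne, j, hu, hv⟩ => hclique j hu hv hne⟩
    obtain ⟨j, hj⟩ := hcover {u, v} (SimpleGraph.isClique_pair.2 fun _ => h)
    exact ⟨j, hj (mem_insert u _), hj (mem_insert_of_mem u rfl)⟩
  refine ⟨fun v => ((T v).min' (hT v) : ℕ), fun v => ((T v).max' (hT v) : ℕ),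
    fun v => by simpa using (T v).min'_le_max' (hT v), fun u v => ?_⟩
  have hle (w : V) := (T w).min'_le_max' (hT w)
  simp only [hadj, hmem, ← mem_inter_iff, Icc_inter_Icc, ← nonempty_def]
  simp [hle, and_comm]

end

/-- Gilmore–Hoffman: a graph is an interval graph iff its maximal cliques
can be linearly ordered so that the cliques containing any given vertex are consecutive. -/
theorem intervalGraph_iff_consecutive_maxClique_order {V : Type*} [Fintype V]
    (G : SimpleGraph V) :
    IsIntervalGraph G ↔
      ∃ (s : ℕ) (X : Fin s → Set V),
        Function.Injective X ∧
        (∀ i, IsMaxClique G (X i)) ∧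
        (∀ c : Set V, IsMaxClique G c → ∃ i, X i = c) ∧
        (∀ (v : V) (i j k : Fin s), i ≤ j → j ≤ k → v ∈ X i → v ∈ X k → v ∈ X j) := by
  constructor
  · rintro ⟨a, b, hab, hadj⟩
    obtain ⟨s, X, hinj, hrange, hmono⟩ :=
      (toFinite {c | IsMaxClique G c}).exists_enum_monotone (injOn_sSup_image_isMaxClique hab hadj)
    have hmax (i : Fin s) : IsMaxClique G (X i) := hrange.subset (mem_range_self i)
    refine ⟨s, X, hinj, hmax, fun c hc => hrange.superset hc, ?_⟩
    intro v i j k hij hjk hi hk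
    rw [(hmax _).mem_iff_sSup_image_mem_Icc hab hadj] at hi hk ⊢
    exact ⟨hi.1.trans (hmono hij), (hmono hjk).trans hk.2⟩
  · rintro ⟨s, X, -, hmax, hsurj, hcons⟩
    refine isIntervalGraph_of_consecutive_cliques X (fun i => (hmax i).1) (fun c hc => ?_) hcons
    obtain ⟨m, hm, hcm⟩ := exists_isMaxClique_superset hc
    obtain ⟨i, rfl⟩ := hsurj m hm
    exact ⟨i, hcm⟩
end
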